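/- arXiv:0907.0664 — 2 statements merged into one kernel-verified Lean document; each statement's English description precedes it below -/
import Mathlib

section
/- With X^{(2k)} as defined recursively (X^{(0)}=1, X even step an indefinite sum of X^{(i-1)}(s)/(p(s)u₀(s)u₀(s+1)), odd step an indefinite sum of u₀(s+1)²X^{(i-1)}(s+1)r(s+1)), the formal power series u₁(n) = u₀(n) Σ_{k=0}^{∞} λ^k X^{(2k)}(n) is a finite sum: for n > n₀ it equals u₀(n) Σ_{k=0}^{n-n₀-1} λ^k X^{(2k)}(n), and for n ≤ n₀ it equals u₀(n) Σ_{k=0}^{n₀-n} λ^k X^{(2k)}(n). -/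
/-- The indefinite sum of `f` vanishing at `n₀`. -/
noncomputable def istar (n₀ : ℤ) (f : ℤ → ℂ) (n : ℤ) : ℂ :=
  if n₀ ≤ n then ∑ j ∈ Finset.Ico n₀ n, f j else -∑ j ∈ Finset.Ico n n₀, f j

/-- The sequences `X⁽ⁱ⁾`: `X⁽⁰⁾ = 1`, even steps sum `X⁽ⁱ⁻¹⁾(s)/(p(s)u₀(s)u₀(s+1))`,
odd steps sum `u₀(s+1)² X⁽ⁱ⁻¹⁾(s+1) r(s+1)`. -/
noncomputable def Xseq (u₀ p r : ℤ → ℂ) (n₀ : ℤ) : ℕ → ℤ → ℂ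
  | 0 => fun _ => 1
  | i + 1 =>
      if (i + 1) % 2 = 0 then
        istar n₀ (fun s => Xseq u₀ p r n₀ i s / (p s * u₀ s * u₀ (s + 1)))
      else
        istar n₀ (fun s => u₀ (s + 1) ^ 2 * Xseq u₀ p r n₀ i (s + 1) * r (s + 1))

/-- The sequences `Y⁽ⁱ⁾`: `Y⁽⁰⁾ = 1`, with the parity roles exchanged. -/
noncomputable def Yseq (u₀ p r : ℤ → ℂ) (n₀ : ℤ) : ℕ → ℤ → ℂ
  | 0 => fun _ => 1
  | i + 1 =>
      if (i + 1) % 2 = 0 then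
        istar n₀ (fun s => u₀ (s + 1) ^ 2 * Yseq u₀ p r n₀ i (s + 1) * r (s + 1))
      else
        istar n₀ (fun s => Yseq u₀ p r n₀ i s / (p s * u₀ s * u₀ (s + 1)))

/-!
Every `X⁽ⁱ⁾` vanishes on a window around `n₀`, and the window for `X⁽²ᵏ⁾`, namely
`[n₀ - k + 1, n₀ + k]`, grows by one point on each side every two steps: an indefinite sum
vanishing at `n₀` vanishes at every point `m` such that its summand vanishes between `n₀` and `m`.
So at a fixed `n` only finitely many terms of the series for `u₁(n)` are nonzero.
-/

theorem istar_eq_zero_of_eqOn_Ico {n₀ a b : ℤ} {f : ℤ → ℂ} (hf : ∀ j ∈ Set.Ico a b, f j = 0)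
    (hn₀ : n₀ ∈ Set.Icc a b) : ∀ m ∈ Set.Icc a b, istar n₀ f m = 0 := by
  rintro m ⟨ham, hmb⟩
  obtain ⟨han₀, hn₀b⟩ := hn₀
  unfold istar
  split_ifs
  · exact Finset.sum_eq_zero fun j hj => hf j (by simp only [Finset.mem_Ico] at hj; grind)
  · rw [Finset.sum_eq_zero fun j hj => hf j (by simp only [Finset.mem_Ico] at hj; grind),
      neg_zero]

section Xseq

variable (u₀ p r : ℤ → ℂ) (n₀ : ℤ)

theorem Xseq_two_mul_add_one (k : ℕ) :
    Xseq u₀ p r n₀ (2 * k + 1) =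
      istar n₀ (fun s => u₀ (s + 1) ^ 2 * Xseq u₀ p r n₀ (2 * k) (s + 1) * r (s + 1)) := by
  rw [Xseq, if_neg (by omega)]

theorem Xseq_two_mul_add_two (k : ℕ) :
    Xseq u₀ p r n₀ (2 * k + 2) =
      istar n₀ (fun s => Xseq u₀ p r n₀ (2 * k + 1) s / (p s * u₀ s * u₀ (s + 1))) := by
  rw [Xseq, if_pos (by omega)]

theorem Xseq_two_mul_add_one_eq_zero {k : ℕ}
    (h : ∀ m ∈ Set.Icc (n₀ - k + 1) (n₀ + k), Xseq u₀ p r n₀ (2 * k) m = 0) :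
    ∀ m ∈ Set.Icc (n₀ - k) (n₀ + k), Xseq u₀ p r n₀ (2 * k + 1) m = 0 := by
  rw [Xseq_two_mul_add_one]
  refine istar_eq_zero_of_eqOn_Ico (fun j ⟨hj₁, hj₂⟩ => ?_) ⟨by omega, by omega⟩
  rw [h (j + 1) ⟨by omega, by omega⟩, mul_zero, zero_mul]

theorem Xseq_two_mul_add_two_eq_zero {k : ℕ}
    (h : ∀ m ∈ Set.Icc (n₀ - k) (n₀ + k), Xseq u₀ p r n₀ (2 * k + 1) m = 0) :
    ∀ m ∈ Set.Icc (n₀ - k) (n₀ + k + 1), Xseq u₀ p r n₀ (2 * k + 2) m = 0 := by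
  rw [Xseq_two_mul_add_two]
  refine istar_eq_zero_of_eqOn_Ico (fun j ⟨hj₁, hj₂⟩ => ?_) ⟨by omega, by omega⟩
  rw [h j ⟨hj₁, by omega⟩, zero_div]

theorem Xseq_two_mul_eq_zero (k : ℕ) :
    ∀ m ∈ Set.Icc (n₀ - k + 1) (n₀ + k), Xseq u₀ p r n₀ (2 * k) m = 0 := by
  induction k with
  | zero => rintro m ⟨h₁, h₂⟩; omega
  | succ k ih =>
    intro m ⟨h₁, h₂⟩
    exact Xseq_two_mul_add_two_eq_zero u₀ p r n₀ (Xseq_two_mul_add_one_eq_zero u₀ p r n₀ ih) m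
      ⟨by push_cast at h₁; omega, by push_cast at h₂; omega⟩

theorem tsum_Xseq_two_mul_eq_sum (lam : ℂ) {n : ℤ} {N : ℕ} (hN : n₀ - N + 1 ≤ n)
    (hN' : n ≤ n₀ + N) :
    ∑' k : ℕ, lam ^ k * Xseq u₀ p r n₀ (2 * k) n
      = ∑ k ∈ Finset.range N, lam ^ k * Xseq u₀ p r n₀ (2 * k) n := by
  refine tsum_eq_sum fun k hk => ?_
  rw [Finset.mem_range, not_lt] at hk
  rw [Xseq_two_mul_eq_zero u₀ p r n₀ k n ⟨by omega, by omega⟩, mul_zero]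

end Xseq

theorem u1_finite_sum_general (u₀ p r : ℤ → ℂ) (n₀ : ℤ) (lam : ℂ) :
    ∀ n : ℤ,
      (n₀ < n →
        u₀ n * ∑' k : ℕ, lam ^ k * Xseq u₀ p r n₀ (2 * k) n
          = u₀ n * ∑ k ∈ Finset.range (n - n₀).toNat, lam ^ k * Xseq u₀ p r n₀ (2 * k) n) ∧
      (n ≤ n₀ →
        u₀ n * ∑' k : ℕ, lam ^ k * Xseq u₀ p r n₀ (2 * k) n
          = u₀ n * ∑ k ∈ Finset.range ((n₀ - n).toNat + 1), lam ^ k * Xseq u₀ p r n₀ (2 * k) n) := by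
  intro n
  refine ⟨fun hn => ?_, fun hn => ?_⟩
  · rw [tsum_Xseq_two_mul_eq_sum u₀ p r n₀ lam (N := (n - n₀).toNat) (by omega) (by omega)]
  · rw [tsum_Xseq_two_mul_eq_sum u₀ p r n₀ lam (N := (n₀ - n).toNat + 1) (by omega) (by omega)]

/-- Lemma 1(ii): the power series defining `u₁` is in fact a finite sum. -/
theorem u1_finite_sum (u₀ p r : ℤ → ℂ) (n₀ : ℤ) (lam : ℂ)
    (hp : ∀ n, p n ≠ 0) (hu₀ : ∀ n, u₀ n ≠ 0) :
    ∀ n : ℤ,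
      (n₀ < n →
        u₀ n * ∑' k : ℕ, lam ^ k * Xseq u₀ p r n₀ (2 * k) n
          = u₀ n * ∑ k ∈ Finset.range (n - n₀).toNat, lam ^ k * Xseq u₀ p r n₀ (2 * k) n) ∧
      (n ≤ n₀ →
        u₀ n * ∑' k : ℕ, lam ^ k * Xseq u₀ p r n₀ (2 * k) n
          = u₀ n * ∑ k ∈ Finset.range ((n₀ - n).toNat + 1), lam ^ k * Xseq u₀ p r n₀ (2 * k) n) :=
  u1_finite_sum_general u₀ p r n₀ lam
end

section
/- Let u₀ be a nonvanishing solution of Δ(p(n-1)Δu(n-1)) + q(n)u(n) = λ₀ r(n)u(n) for some fixed λ₀ ∈ ℂ, with p nonvanishing. Then for every λ ∈ ℂ, the sequence u₁(n) = u₀(n) Σ_{k=0}^{n-n₀-1} (λ-λ₀)^k X^{(2k)}(n) (for n > n₀), with X^{(2k)} defined recursively from u₀, p, r at base point n₀, solves Δ(p(n-1)Δu(n-1)) + q(n)u(n) = λ r(n)u(n). -/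
/-!
Write `u = u₀ w`. Reduction of order turns `L u = λ r u` into
`P(n) Δw(n) - P(n-1) Δw(n-1) = (λ - λ₀) r(n) u₀(n)² w(n)` with `P(n) = p(n) u₀(n) u₀(n+1)`,
using `L u₀ = λ₀ r u₀`. The sequences `X⁽ⁱ⁾` are built so that `P Δ X⁽²ᵏ⁺²⁾ = X⁽²ᵏ⁺¹⁾` and
`Δ X⁽²ᵏ⁺¹⁾(n-1) = u₀(n)² r(n) X⁽²ᵏ⁾(n)`, so the weighted second difference of
`Σ μᵏ X⁽²ᵏ⁾` shifts the series by one power of `μ = λ - λ₀`. Since `X⁽²ᵏ⁾` vanishes on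
`(n₀ - k, n₀ + k]`, the series is a finite sum at every point and may be truncated anywhere
beyond the length used in the statement.
-/

open Finset

/-- The operator `Δ(p(n-1) Δu(n-1)) + q(n) u(n)` of the paper, written out. -/
def sturmLiouville {R : Type*} [CommRing R] (p q u : ℤ → R) (n : ℤ) : R :=
  p n * (u (n + 1) - u n) - p (n - 1) * (u n - u (n - 1)) + q n * u n

theorem mul_sturmLiouville_mul {R : Type*} [CommRing R] (p q u₀ w : ℤ → R) (n : ℤ) :
    u₀ n * sturmLiouville p q (fun m => u₀ m * w m) n
      = u₀ n * w n * sturmLiouville p q u₀ n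
        + sturmLiouville (fun m => p m * u₀ m * u₀ (m + 1)) 0 w n := by
  simp only [sturmLiouville, Pi.zero_apply, sub_add_cancel]
  ring

section istar

variable (n₀ : ℤ) (f : ℤ → ℂ)

theorem istar_add_one (n : ℤ) : istar n₀ f (n + 1) = istar n₀ f n + f n := by
  unfold istar
  rcases le_or_gt n₀ n with h | h
  · rw [if_pos (show n₀ ≤ n + 1 by omega), if_pos h, Ico_add_one_right_eq_Icc,
      ← Ico_insert_right h, sum_insert right_notMem_Ico, add_comm]
  · rw [if_neg (show ¬n₀ ≤ n by omega), ← Ioo_insert_left h, sum_insert left_notMem_Ioo,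
      ← Ico_add_one_left_eq_Ioo]
    split_ifs with h'
    · rw [show n + 1 = n₀ by omega]
      simp
    · ring

variable {n₀ f} in
theorem istar_eq_zero {n : ℤ} (hf : ∀ s, min n₀ n ≤ s → s < max n₀ n → f s = 0) :
    istar n₀ f n = 0 := by
  unfold istar
  split_ifs with h
  · exact sum_eq_zero fun s hs => hf s (by simp at hs; omega) (by simp at hs; omega)
  · rw [sum_eq_zero fun s hs => hf s (by simp at hs; omega) (by simp at hs; omega), neg_zero]

end istar

section Xseq

variable (u₀ p r : ℤ → ℂ) (n₀ : ℤ)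

theorem Xseq_eq_zero (i : ℕ) {n : ℤ} (h₁ : n₀ - ((i + 1) / 2 : ℕ) < n)
    (h₂ : n ≤ n₀ + (i / 2 : ℕ)) : Xseq u₀ p r n₀ i n = 0 := by
  induction i generalizing n with
  | zero => omega
  | succ i ih =>
    rw [Xseq]
    split_ifs with hi
    · exact istar_eq_zero fun s hs₁ hs₂ => by
        rw [ih (by omega) (by omega), zero_div]
    · exact istar_eq_zero fun s hs₁ hs₂ => by
        rw [ih (by omega) (by omega), mul_zero, zero_mul]

theorem Xseq_odd_sub (k : ℕ) (m : ℤ) :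
    Xseq u₀ p r n₀ (2 * k + 1) (m + 1) - Xseq u₀ p r n₀ (2 * k + 1) m
      = u₀ (m + 1) ^ 2 * Xseq u₀ p r n₀ (2 * k) (m + 1) * r (m + 1) := by
  rw [Xseq, if_neg (by omega), istar_add_one, add_sub_cancel_left]

variable {u₀ p} in
theorem mul_Xseq_even_sub (hp : ∀ n, p n ≠ 0) (hu₀ : ∀ n, u₀ n ≠ 0) (k : ℕ) (m : ℤ) :
    p m * u₀ m * u₀ (m + 1) * (Xseq u₀ p r n₀ (2 * k + 2) (m + 1) - Xseq u₀ p r n₀ (2 * k + 2) m)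
      = Xseq u₀ p r n₀ (2 * k + 1) m := by
  rw [Xseq, if_pos (by omega), istar_add_one, add_sub_cancel_left]
  exact mul_div_cancel₀ _ (mul_ne_zero (mul_ne_zero (hp m) (hu₀ m)) (hu₀ (m + 1)))

noncomputable def XseqPartialSum (μ : ℂ) (M : ℕ) (m : ℤ) : ℂ :=
  ∑ k ∈ range M, μ ^ k * Xseq u₀ p r n₀ (2 * k) m

theorem XseqPartialSum_eq_of_le (μ : ℂ) {N M : ℕ} {m : ℤ} (hNM : N ≤ M)
    (h₁ : n₀ - N < m) (h₂ : m ≤ n₀ + N) :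
    XseqPartialSum u₀ p r n₀ μ N m = XseqPartialSum u₀ p r n₀ μ M m := by
  refine sum_subset (range_subset_range.2 hNM) fun k _ hk => ?_
  rw [mem_range, not_lt] at hk
  rw [Xseq_eq_zero u₀ p r n₀ (2 * k) (by omega) (by omega), mul_zero]

variable {u₀ p} in
theorem mul_XseqPartialSum_sub (hp : ∀ n, p n ≠ 0) (hu₀ : ∀ n, u₀ n ≠ 0) (μ : ℂ) (M : ℕ)
    (m : ℤ) :
    p m * u₀ m * u₀ (m + 1) *
        (XseqPartialSum u₀ p r n₀ μ (M + 1) (m + 1) - XseqPartialSum u₀ p r n₀ μ (M + 1) m)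
      = ∑ k ∈ range M, μ ^ (k + 1) * Xseq u₀ p r n₀ (2 * k + 1) m := by
  simp only [XseqPartialSum, sum_range_succ', mul_zero, Xseq.eq_1, add_sub_add_right_eq_sub]
  rw [← sum_sub_distrib, mul_sum]
  refine sum_congr rfl fun k _ => ?_
  rw [← mul_Xseq_even_sub r n₀ hp hu₀ k m, mul_add_one 2 k]
  ring

variable {u₀ p} in
theorem sturmLiouville_XseqPartialSum (hp : ∀ n, p n ≠ 0) (hu₀ : ∀ n, u₀ n ≠ 0) (μ : ℂ)
    (M : ℕ) (n : ℤ) :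
    sturmLiouville (fun m => p m * u₀ m * u₀ (m + 1)) 0 (XseqPartialSum u₀ p r n₀ μ (M + 1)) n
      = μ * r n * u₀ n ^ 2 * XseqPartialSum u₀ p r n₀ μ M n := by
  have hprev := mul_XseqPartialSum_sub r n₀ hp hu₀ μ M (n - 1)
  rw [sub_add_cancel] at hprev
  simp only [sturmLiouville, Pi.zero_apply, zero_mul, add_zero, sub_add_cancel]
  rw [mul_XseqPartialSum_sub r n₀ hp hu₀, hprev, ← sum_sub_distrib, XseqPartialSum, mul_sum]
  refine sum_congr rfl fun k _ => ?_
  have hodd := Xseq_odd_sub u₀ p r n₀ k (n - 1)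
  rw [sub_add_cancel] at hodd
  linear_combination μ ^ (k + 1) * hodd

end Xseq

/-- Remark 3: if `u₀` is a nonvanishing solution for `λ = λ₀`, then
`u₁(n) = u₀(n) Σ (λ-λ₀)ᵏ X⁽²ᵏ⁾(n)` solves the equation with spectral parameter `λ`. -/
theorem shifted_spectral_solution (u₀ p q r u₁ : ℤ → ℂ) (n₀ : ℤ) (lam lam₀ : ℂ)
    (hp : ∀ n, p n ≠ 0) (hu₀ : ∀ n, u₀ n ≠ 0)
    (hsol : ∀ n : ℤ,
      p n * (u₀ (n + 1) - u₀ n) - p (n - 1) * (u₀ n - u₀ (n - 1)) + q n * u₀ n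
        = lam₀ * r n * u₀ n)
    (hu₁ : ∀ n : ℤ, u₁ n = u₀ n *
        ∑ k ∈ Finset.range (if n₀ < n then (n - n₀).toNat else (n₀ - n).toNat + 1),
          (lam - lam₀) ^ k * Xseq u₀ p r n₀ (2 * k) n) :
    ∀ n : ℤ,
      p n * (u₁ (n + 1) - u₁ n) - p (n - 1) * (u₁ n - u₁ (n - 1)) + q n * u₁ n
        = lam * r n * u₁ n := by
  intro n
  set W := XseqPartialSum u₀ p r n₀ (lam - lam₀)
  set M := (n - n₀).natAbs + 1
  have hu₁W (m : ℤ) (hm : n - 1 ≤ m ∧ m ≤ n + 1) : u₁ m = u₀ m * W (M + 1) m := by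
    rw [hu₁ m]
    congr 1
    exact XseqPartialSum_eq_of_le u₀ p r n₀ _ (by split_ifs <;> omega)
      (by split_ifs <;> omega) (by split_ifs <;> omega)
  have htail : W (M + 1) n = W M n :=
    (XseqPartialSum_eq_of_le u₀ p r n₀ _ (by omega) (by omega) (by omega)).symm
  have hred := mul_sturmLiouville_mul p q u₀ (W (M + 1)) n
  rw [sturmLiouville_XseqPartialSum r n₀ hp hu₀] at hred
  unfold sturmLiouville at hred
  apply mul_left_cancel₀ (hu₀ n)
  rw [hu₁W (n + 1) (by omega), hu₁W n (by omega), hu₁W (n - 1) (by omega)]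
  linear_combination hred + u₀ n * W (M + 1) n * hsol n - (lam - lam₀) * r n * u₀ n ^ 2 * htail
end
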